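/- Let f: X → Y be a morphism of G-bornological coarse spaces. Suppose f is a weak coarse equivalence and there exists an entourage U of Y such that for every y ∈ Y there is x ∈ X with f(x) ∈ U[{y}], with stabilizer inclusion G_x ⊆ G_y and finite index |G_y/G_x| < ∞. Then for every G-invariant locally finite subset H of Y there exists a G-invariant locally finite subset L of X and a proper surjective equivariant multivalued map s: L → H with (f×id_Y)(s) a coarse entourage of Y; that is, LF(f) is almost surjective. -/

import Mathlib

open Set

/-- `U[B]`: the result of applying the correspondence `U` to `B`. -/
def relImage {X : Type*} (U : Set (X × X)) (B : Set X) : Set X :=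
  {x | ∃ b ∈ B, (x, b) ∈ U}

/-- the map `f × f` on pairs. -/
def pairMap {X Y : Type*} (f : X → Y) : X × X → Y × Y :=
  fun p => (f p.1, f p.2)

/-- the action of `g` on subsets of `X × X`. -/
def setSMul {G X : Type*} [SMul G X] (g : G) (U : Set (X × X)) : Set (X × X) :=
  (fun p : X × X => (g • p.1, g • p.2)) '' U

/-- A `G`-coarse structure on a `G`-set `X`. -/
structure GCoarse (G X : Type*) [Group G] [MulAction G X] where
  ent : Set (Set (X × X))
  smul_mem : ∀ (g : G), ∀ U ∈ ent, setSMul g U ∈ ent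
  diag_mem : Set.diagonal X ∈ ent
  subset_mem : ∀ U ∈ ent, ∀ V, V ⊆ U → V ∈ ent
  union_mem : ∀ U ∈ ent, ∀ V ∈ ent, U ∪ V ∈ ent
  swap_mem : ∀ U ∈ ent, Prod.swap '' U ∈ ent
  comp_mem : ∀ U ∈ ent, ∀ V ∈ ent,
    {p : X × X | ∃ y : X, (p.1, y) ∈ U ∧ (y, p.2) ∈ V} ∈ ent
  cofinal : ∀ U ∈ ent, ∃ V ∈ ent, U ⊆ V ∧ ∀ g : G, setSMul g V = V

/-- A `G`-bornology on a `G`-set `X`. -/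
structure GBorn (G X : Type*) [Group G] [MulAction G X] where
  bdd : Set (Set X)
  smul_mem : ∀ (g : G), ∀ B ∈ bdd, (fun x => g • x) '' B ∈ bdd
  subset_mem : ∀ B ∈ bdd, ∀ A, A ⊆ B → A ∈ bdd
  union_mem : ∀ B ∈ bdd, ∀ B' ∈ bdd, B ∪ B' ∈ bdd
  covers : ∀ x : X, ∃ B ∈ bdd, x ∈ B

/-- A `G`-bornological coarse space structure on a `G`-set `X`. -/
structure GBornCoarse (G X : Type*) [Group G] [MulAction G X] where
  coarse : GCoarse G X
  born : GBorn G X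
  compat : ∀ U ∈ coarse.ent, ∀ B ∈ born.bdd, relImage U B ∈ born.bdd

/-- a morphism of `G`-bornological coarse spaces: an equivariant, controlled and proper map. -/
def IsMorphism {G X Y : Type*} [Group G] [MulAction G X] [MulAction G Y]
    (SX : GBornCoarse G X) (SY : GBornCoarse G Y) (f : X → Y) : Prop :=
  (∀ (g : G) (x : X), f (g • x) = g • f x) ∧
  (∀ U ∈ SX.coarse.ent, pairMap f '' U ∈ SY.coarse.ent) ∧
  (∀ B ∈ SY.born.bdd, f ⁻¹' B ∈ SX.born.bdd)

/-!
Pick a representative `r` in every `G`-orbit of `Y` and the point `x r` that the hypothesis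
provides, and let `s` send `g • r ∈ H` to every `g • x r`; this is equivariant by construction.
The fibre of `s` over `g • r` is a translate of the `G_r`-orbit of `x r`, which is finite because
`G_{x r}` has finite index in `G_r`. The set `(f × id)(s)` lies in a `G`-invariant entourage
`V ⊇ U`, and `f` maps bounded sets to bounded ones (through the coarse inverse), so local
finiteness of `H` bounds the fibres of `s` over points of `L` and makes `L` locally finite.
-/

open MulAction

theorem finite_orbit_of_relIndex_stabilizer_ne_zero {G X : Type*} [Group G] [MulAction G X]
    {K : Subgroup G} {a : X} (h : (stabilizer G a).relIndex K ≠ 0) : (orbit K a).Finite := by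
  have hstab : stabilizer K a = (stabilizer G a).subgroupOf K := rfl
  rw [Subgroup.relIndex, ← hstab, index_stabilizer] at h
  exact finite_of_ncard_ne_zero h

theorem image_smul_eq_self_of_smul_mem {G α : Type*} [Group G] [MulAction G α] {s : Set α}
    (hs : ∀ (g : G), ∀ a ∈ s, g • a ∈ s) (g : G) : (fun a => g • a) '' s = s := by
  refine (image_subset_iff.2 fun a ha => hs g a ha).antisymm fun a ha => ?_
  exact ⟨g⁻¹ • a, hs g⁻¹ a ha, smul_inv_smul g a⟩

section OrbitLift

variable (G : Type*) {X Y : Type*} [Group G] [MulAction G X] [MulAction G Y]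

noncomputable def orbitRep (y : Y) : Y :=
  (Quotient.mk (orbitRel G Y) y).out

theorem orbitRep_smul (g : G) (y : Y) : orbitRep G (g • y) = orbitRep G y :=
  congrArg Quotient.out (Quotient.sound (mem_orbit y g))

theorem exists_smul_orbitRep (y : Y) : ∃ g : G, g • orbitRep G y = y := by
  obtain ⟨g, hg⟩ := mem_orbit_iff.1 (Quotient.mk_out (s := orbitRel G Y) y)
  exact ⟨g⁻¹, by rw [orbitRep, ← hg, inv_smul_smul]⟩

def orbitLift (x : Y → X) (H : Set Y) : Set (X × Y) :=
  {p | p.2 ∈ H ∧ ∃ g : G, g • orbitRep G p.2 = p.2 ∧ p.1 = g • x (orbitRep G p.2)}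

variable {G} {x : Y → X} {H : Set Y}

theorem exists_mem_orbitLift {h : Y} (hh : h ∈ H) : ∃ ℓ, (ℓ, h) ∈ orbitLift G x H := by
  obtain ⟨g, hg⟩ := exists_smul_orbitRep G h
  exact ⟨g • x (orbitRep G h), hh, g, hg, rfl⟩

theorem smul_mem_orbitLift (hH : ∀ (g : G), ∀ h ∈ H, g • h ∈ H) (g : G) {p : X × Y}
    (hp : p ∈ orbitLift G x H) : g • p ∈ orbitLift G x H := by
  obtain ⟨hpH, k, hk, hpk⟩ := hp
  refine ⟨hH g _ hpH, g * k, ?_, ?_⟩ <;>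
    simp only [Prod.smul_snd, Prod.smul_fst, orbitRep_smul, mul_smul, hk, hpk]

theorem finite_orbitLift_fiber
    (hx : ∀ y, (stabilizer G (x y)).relIndex (stabilizer G y) ≠ 0) (h : Y) :
    {ℓ | (ℓ, h) ∈ orbitLift G x H}.Finite := by
  rcases eq_empty_or_nonempty {ℓ | (ℓ, h) ∈ orbitLift G x H} with hempty | ⟨ℓ₀, -, g₀, hg₀, -⟩
  · simp [hempty]
  set r := orbitRep G h
  -- every `g` with `g • r = h` lies in `g₀ • stabilizer G r`
  refine ((finite_orbit_of_relIndex_stabilizer_ne_zero (hx r)).image (g₀ • ·)).subset ?_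
  rintro ℓ ⟨-, g, hg, hℓ⟩
  dsimp only at hg₀ hg hℓ
  subst hℓ
  have hk : g₀⁻¹ * g ∈ stabilizer G r := by
    rw [mem_stabilizer_iff, mul_smul, hg, inv_smul_eq_iff, hg₀]
  exact ⟨_, ⟨⟨_, hk⟩, rfl⟩, by simp [r, Subgroup.smul_def, smul_smul]⟩

theorem prodMap_mem_of_mem_orbitLift {f : X → Y} (hf : ∀ (g : G) (x : X), f (g • x) = g • f x)
    {V : Set (Y × Y)} (hV : ∀ g : G, setSMul g V = V) (hxV : ∀ y, (f (x y), y) ∈ V)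
    {p : X × Y} (hp : p ∈ orbitLift G x H) : (f p.1, p.2) ∈ V := by
  obtain ⟨-, g, hg, hp1⟩ := hp
  rw [← hV g, hp1, hf]
  exact ⟨_, hxV _, Prod.ext rfl hg⟩

end OrbitLift

section Bornology

variable {G X Y : Type*} [Group G] [MulAction G X] [MulAction G Y]

theorem GBorn.singleton_mem (B : GBorn G X) (x : X) : {x} ∈ B.bdd := by
  obtain ⟨A, hA, hxA⟩ := B.covers x
  exact B.subset_mem A hA {x} (singleton_subset_iff.2 hxA)

theorem GBornCoarse.image_mem_bdd_of_close (SX : GBornCoarse G X) (BY : GBorn G Y)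
    {f : X → Y} {g : Y → X} (hg : ∀ B ∈ SX.born.bdd, g ⁻¹' B ∈ BY.bdd)
    (hclose : (fun x : X => (x, g (f x))) '' univ ∈ SX.coarse.ent)
    {B : Set X} (hB : B ∈ SX.born.bdd) : f '' B ∈ BY.bdd := by
  -- `g (f B)` lies in the thickening of `B` by the entourage `{(g (f x), x)}`
  refine BY.subset_mem _ (hg _ (SX.compat _ (SX.coarse.swap_mem _ hclose) B hB)) _ ?_
  rintro _ ⟨b, hb, rfl⟩
  exact ⟨b, hb, _, ⟨b, trivial, rfl⟩, rfl⟩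

variable (BX : GBorn G X) (SY : GBornCoarse G Y) {f : X → Y}
  {V : Set (Y × Y)} {H : Set Y} {s : Set (X × Y)}

theorem finite_snd_of_fst_mem_bdd (hf : ∀ B ∈ BX.bdd, f '' B ∈ SY.born.bdd)
    (hV : V ∈ SY.coarse.ent) (hH : ∀ B ∈ SY.born.bdd, (H ∩ B).Finite)
    (hsH : ∀ p ∈ s, p.2 ∈ H) (hsV : ∀ p ∈ s, (f p.1, p.2) ∈ V)
    {B : Set X} (hB : B ∈ BX.bdd) : {h | ∃ ℓ ∈ B, (ℓ, h) ∈ s}.Finite := by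
  refine (hH _ (SY.compat _ (SY.coarse.swap_mem V hV) _ (hf B hB))).subset ?_
  rintro h ⟨ℓ, hℓ, hs⟩
  exact ⟨hsH _ hs, f ℓ, mem_image_of_mem f hℓ, _, hsV _ hs, rfl⟩

theorem finite_fst_image_inter_bdd (hf : ∀ B ∈ BX.bdd, f '' B ∈ SY.born.bdd)
    (hV : V ∈ SY.coarse.ent) (hH : ∀ B ∈ SY.born.bdd, (H ∩ B).Finite)
    (hsH : ∀ p ∈ s, p.2 ∈ H) (hsV : ∀ p ∈ s, (f p.1, p.2) ∈ V)
    (hfib : ∀ h, {ℓ | (ℓ, h) ∈ s}.Finite) {B : Set X} (hB : B ∈ BX.bdd) :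
    (Prod.fst '' s ∩ B).Finite := by
  refine ((finite_snd_of_fst_mem_bdd BX SY hf hV hH hsH hsV hB).biUnion
    fun h _ => hfib h).subset ?_
  rintro ℓ ⟨⟨⟨_, h⟩, hs, rfl⟩, hℓB⟩
  exact mem_biUnion ⟨_, hℓB, hs⟩ hs

end Bornology

/-- let `f : X → Y` be a morphism of `G`-bornological coarse spaces which is a
weak coarse equivalence, and suppose there is an entourage `U` of `Y` such that every `y ∈ Y`
admits an `x ∈ X` with `f(x) ∈ U[{y}]`, `G_x ⊆ G_y` and `|G_y/G_x| < ∞`.  Then `LF(f)` is almost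
surjective: every `G`-invariant locally finite subset `H` of `Y` admits an `f`-shadow, i.e. a
`G`-invariant locally finite subset `L` of `X` together with a proper surjective equivariant
multivalued map `s : L → H` such that `(f × id_Y)(s)` is a coarse entourage of `Y`. -/
theorem stmt17 {G X Y : Type*} [Group G] [MulAction G X] [MulAction G Y]
    (SX : GBornCoarse G X) (SY : GBornCoarse G Y) (f : X → Y)
    (hmor : IsMorphism SX SY f)
    (hweak : ∃ g : Y → X,
      (∀ U ∈ SY.coarse.ent, pairMap g '' U ∈ SX.coarse.ent) ∧
      (∀ B ∈ SX.born.bdd, g ⁻¹' B ∈ SY.born.bdd) ∧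
      ((fun y : Y => (y, f (g y))) '' Set.univ ∈ SY.coarse.ent) ∧
      ((fun x : X => (x, g (f x))) '' Set.univ ∈ SX.coarse.ent))
    (hU : ∃ U ∈ SY.coarse.ent, ∀ y : Y, ∃ x : X,
      f x ∈ relImage U {y} ∧
      MulAction.stabilizer G x ≤ MulAction.stabilizer G y ∧
      (MulAction.stabilizer G x).relIndex (MulAction.stabilizer G y) ≠ 0)
    (H : Set Y) (hHinv : ∀ g : G, (fun y => g • y) '' H = H)
    (hHlf : ∀ B ∈ SY.born.bdd, (H ∩ B).Finite) :
    ∃ L : Set X,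
      (∀ g : G, (fun x => g • x) '' L = L) ∧
      (∀ B ∈ SX.born.bdd, (L ∩ B).Finite) ∧
      ∃ s : Set (X × Y),
        s ⊆ L ×ˢ H ∧
        (∀ ℓ ∈ L, ∃ h : Y, (ℓ, h) ∈ s) ∧
        (∀ h ∈ H, ∃ ℓ : X, (ℓ, h) ∈ s) ∧
        (∀ g : G, (fun p : X × Y => (g • p.1, g • p.2)) '' s = s) ∧
        (∀ ℓ : X, {h : Y | (ℓ, h) ∈ s}.Finite) ∧
        (∀ h : Y, {ℓ : X | (ℓ, h) ∈ s}.Finite) ∧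
        ((fun p : X × Y => (f p.1, p.2)) '' s ∈ SY.coarse.ent) := by
  obtain ⟨g', -, hg'B, -, hclose⟩ := hweak
  obtain ⟨U, hU, hxU⟩ := hU
  obtain ⟨V, hV, hUV, hVinv⟩ := SY.coarse.cofinal U hU
  choose x hxU _ hidx using hxU
  have hHsmul : ∀ (g : G), ∀ h ∈ H, g • h ∈ H := fun g h hh => hHinv g ▸ mem_image_of_mem _ hh
  have hfB : ∀ B ∈ SX.born.bdd, f '' B ∈ SY.born.bdd := fun B hB =>
    SX.image_mem_bdd_of_close SY.born hg'B hclose hB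
  set s := orbitLift G x H
  have hsH : ∀ p ∈ s, p.2 ∈ H := fun p hp => hp.1
  have hsV : ∀ p ∈ s, (f p.1, p.2) ∈ V := fun p =>
    prodMap_mem_of_mem_orbitLift hmor.1 hVinv fun y => by
      obtain ⟨_, rfl, hy⟩ := hxU y
      exact hUV hy
  have hfib : ∀ h, {ℓ | (ℓ, h) ∈ s}.Finite := finite_orbitLift_fiber hidx
  refine ⟨Prod.fst '' s, image_smul_eq_self_of_smul_mem ?_,
    fun B => finite_fst_image_inter_bdd SX.born SY hfB hV hHlf hsH hsV hfib, s,
    fun p hp => ⟨mem_image_of_mem _ hp, hp.1⟩, ?_, fun h => exists_mem_orbitLift,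
    image_smul_eq_self_of_smul_mem (smul_mem_orbitLift hHsmul), fun ℓ => ?_, hfib,
    SY.coarse.subset_mem V hV _ (image_subset_iff.2 hsV)⟩
  · rintro g _ ⟨p, hp, rfl⟩
    exact ⟨g • p, smul_mem_orbitLift hHsmul g hp, rfl⟩
  · rintro ℓ ⟨⟨_, h⟩, hp, rfl⟩
    exact ⟨h, hp⟩
  · exact (finite_snd_of_fst_mem_bdd SX.born SY hfB hV hHlf hsH hsV
      (SX.born.singleton_mem ℓ)).subset fun h hs => ⟨ℓ, rfl, hs⟩
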